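/- arXiv:2209.02220 — 7 statements merged into one kernel-verified Lean document; each statement's English description precedes it below -/
import Mathlib

section
/- For nonnegative integers n, k and real φ, the noncentral Stirling number of the second kind satisfies S(n+1, k, φ) = φ·S(n, k, φ) + S(n, k−1, φ+1). -/
open Finset

/-- Noncentral Stirling numbers of the second kind, with `S n k φ = 0` for `k < 0`. -/
noncomputable def nS (n : ℕ) (k : ℤ) (φ : ℝ) : ℝ :=
  if k < 0 then 0 else
    (1 / (Nat.factorial k.toNat : ℝ)) *
      ∑ i ∈ Finset.range (k.toNat + 1),
        (Nat.choose k.toNat i : ℝ) * (-1) ^ (k.toNat - i) * ((i : ℝ) + φ) ^ n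

/-! Write `(i + φ)^(n+1) = φ (i + φ)^n + i (i + φ)^n` in the defining sum of `S(n+1, k, φ)`.
The first part is `φ S(n, k, φ)`; in the second, the absorption identity
`i C(k, i) = k C(k-1, i-1)` and the shift `i ↦ i + 1` turn it into `k · S(n, k-1, φ+1)` up to
the factor `k! = k (k-1)!`. -/

theorem sum_range_choose_mul_neg_one_pow_mul_index {R : Type*} [CommRing R] (m : ℕ)
    (f : ℕ → R) :
    ∑ i ∈ range (m + 2), ((m + 1).choose i : R) * (-1) ^ (m + 1 - i) * i * f i =
      (m + 1) * ∑ i ∈ range (m + 1), (m.choose i : R) * (-1) ^ (m - i) * f (i + 1) := by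
  rw [sum_range_succ', mul_sum]
  simp only [Nat.cast_zero, mul_zero, zero_mul, add_zero]
  refine sum_congr rfl fun i _ => ?_
  have hchoose : ((m + 1).choose (i + 1) : R) * (i + 1) = (m + 1) * m.choose i := by
    simpa using congrArg (Nat.cast : ℕ → R) (Nat.add_one_mul_choose_eq m i).symm
  rw [Nat.add_sub_add_right, Nat.cast_succ]
  linear_combination (-1 : R) ^ (m - i) * f (i + 1) * hchoose

theorem nS_of_neg (n : ℕ) {k : ℤ} (hk : k < 0) (φ : ℝ) : nS n k φ = 0 :=
  if_pos hk

theorem nS_natCast (n k : ℕ) (φ : ℝ) :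
    nS n k φ = (k.factorial : ℝ)⁻¹ *
      ∑ i ∈ range (k + 1), (k.choose i : ℝ) * (-1) ^ (k - i) * ((i : ℝ) + φ) ^ n := by
  simp [nS]

theorem stirling_recursion_shift (n k : ℕ) (φ : ℝ) :
    nS (n + 1) (k : ℤ) φ = φ * nS n (k : ℤ) φ + nS n ((k : ℤ) - 1) (φ + 1) := by
  cases k with
  | zero =>
    rw [nS_natCast, nS_natCast, Nat.cast_zero, zero_sub, nS_of_neg n (by norm_num)]
    simp [pow_succ, mul_comm]
  | succ m =>
    rw [nS_natCast, nS_natCast, Nat.cast_succ, add_sub_cancel_right, nS_natCast]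
    have hsplit : ∑ i ∈ range (m + 2),
        ((m + 1).choose i : ℝ) * (-1) ^ (m + 1 - i) * ((i : ℝ) + φ) ^ (n + 1) =
        φ * ∑ i ∈ range (m + 2), ((m + 1).choose i : ℝ) * (-1) ^ (m + 1 - i) * ((i : ℝ) + φ) ^ n +
          ∑ i ∈ range (m + 2),
            ((m + 1).choose i : ℝ) * (-1) ^ (m + 1 - i) * i * ((i : ℝ) + φ) ^ n := by
      rw [mul_sum, ← sum_add_distrib]
      exact sum_congr rfl fun i _ => by ring
    rw [hsplit, sum_range_choose_mul_neg_one_pow_mul_index, Nat.factorial_succ]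
    push_cast [add_assoc, add_comm 1 φ]
    field_simp
end

section
/- For each k = 0, 1, …, m, the vector v_k with entries v_{i,k} = C(m−i, k−i) (zero when k < i) is an eigenvector of the (m+1)×(m+1) upper-bidiagonal matrix P with eigenvalue λ_k = 1 − (1 − k/m)·θ, where P has diagonal entries P_{t,t} = 1 − θ(m−t)/m and superdiagonal entries P_{t,t+1} = θ(m−t)/m. -/
/-!
Row `i` of `P v` only sees `v i` and `v (i + 1)`. For `v i = C(m - i, k - i)` the binomial
identity `(m - i) C(m - i - 1, k - i - 1) = (k - i) C(m - i, k - i)` turns the superdiagonal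
contribution `θ (m - i) / m · v (i + 1)` into `θ (k - i) / m · v i`, so that
`(P v) i = (1 - θ (m - i) / m + θ (k - i) / m) v i = (1 - (1 - k / m) θ) v i`.
-/

open Finset Matrix

/-- Transition matrix of the extended occupancy chain on states `0, …, m`. -/
noncomputable def P (m : ℕ) (θ : ℝ) : Matrix (Fin (m + 1)) (Fin (m + 1)) ℝ :=
  fun t s =>
    if (s : ℕ) = (t : ℕ) then 1 - θ * ((m : ℝ) - (t : ℕ)) / m
    else if (s : ℕ) = (t : ℕ) + 1 then θ * ((m : ℝ) - (t : ℕ)) / m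
    else 0

-- At `i = m` the term `f (m + 1)` lies outside the matrix, but its coefficient vanishes.
theorem P_mulVec_apply (m : ℕ) (θ : ℝ) (f : ℕ → ℝ) (i : Fin (m + 1)) :
    (P m θ *ᵥ fun j => f j) i =
      (1 - θ * ((m : ℝ) - i) / m) * f i + θ * ((m : ℝ) - i) / m * f (i + 1) := by
  let row : ℕ → ℝ := fun s =>
    (if s = i then 1 - θ * ((m : ℝ) - i) / m
      else if s = i + 1 then θ * ((m : ℝ) - i) / m else 0) * f s
  calc (P m θ *ᵥ fun j => f j) i = ∑ s ∈ range (m + 1), row s :=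
        Fin.sum_univ_eq_sum_range row (m + 1)
    _ = row i + row (i + 1) := by
        refine sum_eq_add (i : ℕ) (i + 1) (by omega) (fun s _ hs => ?_)
          (fun hi => absurd (mem_range.2 i.isLt) hi) (fun hi => ?_)
        · simp [row, hs.1, hs.2]
        · have him : (i : ℕ) = m := by simp only [mem_range] at hi; omega
          simp [row, him]
    _ = _ := by simp [row]

noncomputable def occupancyEigenvector (m k j : ℕ) : ℝ :=
  if j ≤ k then ((m - j).choose (k - j) : ℝ) else 0

theorem Nat.mul_choose_sub_one_sub_one (n : ℕ) {r : ℕ} (hr : 0 < r) :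
    n * (n - 1).choose (r - 1) = r * n.choose r := by
  obtain ⟨r, rfl⟩ := Nat.exists_eq_add_of_lt hr
  rcases n with _ | n
  · simp
  · simpa [mul_comm] using Nat.add_one_mul_choose_eq n r

theorem sub_mul_occupancyEigenvector_succ (m k : ℕ) {j : ℕ} (hj : j ≤ m) :
    ((m : ℝ) - j) * occupancyEigenvector m k (j + 1) =
      ((k : ℝ) - j) * occupancyEigenvector m k j := by
  unfold occupancyEigenvector
  rcases lt_trichotomy j k with hjk | rfl | hkj
  · rw [if_pos (Nat.succ_le_of_lt hjk), if_pos hjk.le, ← Nat.cast_sub hj, ← Nat.cast_sub hjk.le,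
      Nat.sub_add_eq, Nat.sub_add_eq]
    exact_mod_cast Nat.mul_choose_sub_one_sub_one (m - j) (Nat.sub_pos_of_lt hjk)
  · simp
  · rw [if_neg (by omega), if_neg (by omega)]
    ring

theorem occupancy_eigenvectors (m : ℕ) (hm : 0 < m) (θ : ℝ) (k : Fin (m + 1)) :
    (P m θ).mulVec
        (fun i : Fin (m + 1) =>
          if (i : ℕ) ≤ (k : ℕ) then ((m - (i : ℕ)).choose ((k : ℕ) - (i : ℕ)) : ℝ) else 0) =
      (1 - (1 - ((k : ℕ) : ℝ) / m) * θ) •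
        (fun i : Fin (m + 1) =>
          if (i : ℕ) ≤ (k : ℕ) then ((m - (i : ℕ)).choose ((k : ℕ) - (i : ℕ)) : ℝ) else 0) := by
  funext i
  change (P m θ *ᵥ fun j : Fin (m + 1) => occupancyEigenvector m k j) i =
    _ * occupancyEigenvector m k i
  have hm' : (m : ℝ) ≠ 0 := Nat.cast_ne_zero.mpr hm.ne'
  have hsucc := sub_mul_occupancyEigenvector_succ m k (Nat.lt_succ_iff.mp i.isLt)
  rw [P_mulVec_apply]
  field_simp
  linear_combination θ * hsucc
end

section
/- For integers 0 ≤ t ≤ k ≤ m, the n-step transition probability of the extended occupancy Markov chain from state t to state k equals C(m−t, k−t)·∑_{i=0}^{k−t} C(k−t, i)·(−1)^{k−t−i}·(1 − θ·(m−t−i)/m)^n. -/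
open Finset Matrix

/-!
The columns of the binomial matrix `V t s = C(m - t, m - s)` are eigenvectors of `P` with
eigenvalues `λ s = 1 - θ (m - s) / m`, and binomial inversion gives
`V⁻¹ s k = (-1)^(s + k) C(m - s, m - k)`. Hence `P ^ n = V · diag(λ ^ n) · V⁻¹`, and the
product rule `C(m - t, m - s) C(m - s, m - k) = C(m - t, k - t) C(k - t, s - t)` turns the
entry `(t, k)` into the stated alternating sum.
-/

theorem pow_eq_mul_pow_mul_of_mul_eq_mul {M : Type*} [Monoid M] {a v d w : M}
    (had : a * v = v * d) (hvw : v * w = 1) (n : ℕ) : a ^ n = v * d ^ n * w := by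
  have hpow : v * d ^ n = a ^ n * v := SemiconjBy.pow_right had.symm n
  calc a ^ n = a ^ n * (v * w) := by rw [hvw, mul_one]
    _ = v * d ^ n * w := by rw [← mul_assoc, ← hpow]

theorem Nat.cast_mul_choose_pred {R : Type*} [CommRing R] (u j : ℕ) :
    (u : R) * (u - 1).choose j = ((u : R) - j) * u.choose j := by
  cases u with
  | zero => cases j <;> simp
  | succ n =>
    rcases le_or_gt j (n + 1) with hj | hj
    · have h := congrArg (Nat.cast : ℕ → R) (Nat.choose_mul_succ_eq n j)
      push_cast [Nat.cast_sub hj] at h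
      simp only [Nat.add_sub_cancel, Nat.cast_add, Nat.cast_one]
      linear_combination h
    · simp [Nat.choose_eq_zero_of_lt hj, Nat.choose_eq_zero_of_lt (by omega : n < j)]

theorem Nat.choose_sub_mul_choose_sub {m t s k : ℕ} (hts : t ≤ s) (hsk : s ≤ k)
    (hkm : k ≤ m) :
    (m - t).choose (m - s) * (m - s).choose (m - k) =
      (m - t).choose (k - t) * (k - t).choose (s - t) := by
  rw [Nat.choose_mul (by omega), Nat.choose_symm_of_eq_add (by omega : m - t = (m - k) + (k - t)),
    Nat.choose_symm_of_eq_add (by omega : m - t - (m - k) = (m - s - (m - k)) + (s - t)),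
    show m - t - (m - k) = k - t by omega]

namespace OccupancyChain

variable (m n : ℕ) (θ : ℝ)

noncomputable def eigenvalue (s : ℕ) : ℝ := 1 - θ * ((m : ℝ) - s) / m

/-- Indexed through `m - s` so that it vanishes below the diagonal without a case split. -/
def eigenvectorMatrix : Matrix (Fin (m + 1)) (Fin (m + 1)) ℝ :=
  fun t s => ((m - t : ℕ).choose (m - s) : ℝ)

/-- The sign is `(-1) ^ (s + k)` rather than `(-1) ^ (k - s)` to avoid truncated subtraction. -/
def eigenvectorMatrixInv : Matrix (Fin (m + 1)) (Fin (m + 1)) ℝ :=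
  fun s k => (-1) ^ ((s : ℕ) + k) * ((m - s : ℕ).choose (m - k) : ℝ)

theorem P_mulVec_apply (f : ℕ → ℝ) (t : Fin (m + 1)) :
    (P m θ *ᵥ fun r => f r) t =
      eigenvalue m θ t * f t + (1 - eigenvalue m θ t) * f (t + 1) := by
  have hrow : ∀ r : ℕ, (if r = t then 1 - θ * ((m : ℝ) - t) / m
      else if r = t + 1 then θ * ((m : ℝ) - t) / m else 0) * f r =
      (if (t : ℕ) = r then eigenvalue m θ t * f r else 0) +
        if (t : ℕ) + 1 = r then (1 - eigenvalue m θ t) * f r else 0 := by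
    intro r
    unfold eigenvalue
    split_ifs <;> first | omega | ring
  simp only [mulVec, dotProduct, P]
  rw [Fin.sum_univ_eq_sum_range (fun r => (if r = t then 1 - θ * ((m : ℝ) - t) / m
      else if r = t + 1 then θ * ((m : ℝ) - t) / m else 0) * f r),
    sum_congr rfl fun r _ => hrow r, sum_add_distrib, sum_ite_eq, sum_ite_eq,
    if_pos (mem_range.2 (Nat.lt_succ_of_le t.is_le))]
  split_ifs with hlt
  · rfl
  · -- at `t = m` there is no state `t + 1`, but its weight `1 - eigenvalue m θ m` vanishes
    have htm : (t : ℕ) = m := by simp only [mem_range] at hlt; omega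
    simp [eigenvalue, htm]

theorem P_mul_eigenvectorMatrix :
    P m θ * eigenvectorMatrix m =
      eigenvectorMatrix m * diagonal fun s : Fin (m + 1) => eigenvalue m θ s := by
  ext t s
  rw [mul_diagonal]
  change (P m θ *ᵥ fun r : Fin (m + 1) => (((m - (r : ℕ)).choose (m - s) : ℕ) : ℝ)) t = _
  rw [P_mulVec_apply m θ (fun r => (((m - r).choose (m - s) : ℕ) : ℝ))]
  have hpred := Nat.cast_mul_choose_pred (R := ℝ) (m - t) (m - s)
  rw [show m - (t + 1) = m - t - 1 by omega]
  simp only [eigenvectorMatrix, eigenvalue]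
  push_cast [Nat.cast_sub t.is_le, Nat.cast_sub s.is_le] at hpred ⊢
  linear_combination (θ / m) * hpred

theorem sum_eigenvectorMatrix_mul_mul_eigenvectorMatrixInv (g : ℕ → ℝ) {t k : Fin (m + 1)}
    (htk : (t : ℕ) ≤ k) :
    ∑ s, eigenvectorMatrix m t s * g s * eigenvectorMatrixInv m s k =
      ((m - t).choose (k - t) : ℝ) *
        ∑ i ∈ range (k - t + 1),
          (((k : ℕ) - t).choose i : ℝ) * (-1) ^ ((k : ℕ) - t - i) * g (t + i) := by
  simp only [eigenvectorMatrix, eigenvectorMatrixInv]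
  rw [Fin.sum_univ_eq_sum_range (fun s => ((m - t).choose (m - s) : ℝ) * g s *
      ((-1) ^ (s + k) * ((m - s).choose (m - k) : ℝ))) (m + 1)]
  have hsupp : Ico (t : ℕ) (k + 1) ⊆ range (m + 1) := fun s hs => by
    simp only [mem_Ico, mem_range] at hs ⊢; omega
  rw [← sum_subset hsupp fun s hs hs' => ?outside, sum_Ico_eq_sum_range,
    show (k : ℕ) + 1 - t = k - t + 1 by omega, mul_sum]
  case outside =>
    simp only [mem_Ico, mem_range, not_and_or, not_le, not_lt] at hs hs'
    rcases hs' with hst | hks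
    · simp [Nat.choose_eq_zero_of_lt (by omega : m - t < m - s)]
    · simp [Nat.choose_eq_zero_of_lt (by omega : m - s < m - k)]
  refine sum_congr rfl fun i hi => ?_
  have hi : i ≤ k - t := Nat.lt_succ_iff.1 (mem_range.1 hi)
  have hchoose := congrArg (Nat.cast : ℕ → ℝ)
    (Nat.choose_sub_mul_choose_sub (m := m) (Nat.le_add_right t i) (by omega : t + i ≤ k) k.is_le)
  have hsign : (-1 : ℝ) ^ (t + i + k) = (-1) ^ (k - t - i) := by
    rw [show (t : ℕ) + i + k = k - t - i + 2 * (t + i) by omega, pow_add, pow_mul]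
    norm_num
  rw [Nat.add_sub_cancel_left] at hchoose
  push_cast at hchoose
  rw [hsign]
  linear_combination g (t + i) * (-1 : ℝ) ^ (k - t - i) * hchoose

theorem eigenvectorMatrix_mul_eigenvectorMatrixInv :
    eigenvectorMatrix m * eigenvectorMatrixInv m = 1 := by
  ext t k
  rw [mul_apply, one_apply]
  rcases le_or_gt (t : ℕ) k with htk | hkt
  · have halt : ∑ i ∈ range (k - t + 1),
        (((k : ℕ) - t).choose i : ℝ) * (-1) ^ ((k : ℕ) - t - i) = 0 ^ ((k : ℕ) - t) := by
      rw [← sub_self (1 : ℝ), sub_eq_add_neg, add_pow]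
      simp [mul_comm]
    have h := sum_eigenvectorMatrix_mul_mul_eigenvectorMatrixInv m (fun _ => 1) htk
    simp only [mul_one] at h
    rw [h, halt]
    rcases eq_or_lt_of_le htk with heq | hlt
    · simp [Fin.ext heq]
    · simp [(Fin.ne_of_lt hlt), Nat.sub_ne_zero_of_lt hlt]
  · rw [if_neg (Fin.ne_of_gt hkt)]
    refine sum_eq_zero fun s _ => ?_
    rcases lt_or_ge (s : ℕ) t with hst | hts
    · simp [eigenvectorMatrix, Nat.choose_eq_zero_of_lt (by omega : m - t < m - s)]
    · simp [eigenvectorMatrixInv, Nat.choose_eq_zero_of_lt (by omega : m - s < m - k)]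

theorem P_pow :
    P m θ ^ n = eigenvectorMatrix m * diagonal (fun s : Fin (m + 1) => eigenvalue m θ s ^ n) *
      eigenvectorMatrixInv m := by
  rw [pow_eq_mul_pow_mul_of_mul_eq_mul (P_mul_eigenvectorMatrix m θ)
    (eigenvectorMatrix_mul_eigenvectorMatrixInv m), diagonal_pow]
  rfl

end OccupancyChain

open OccupancyChain in
theorem occupancy_n_step_transition_general (m n : ℕ) (θ : ℝ) (t k : Fin (m + 1))
    (htk : (t : ℕ) ≤ (k : ℕ)) :
    (P m θ ^ n) t k =
      ((m - (t : ℕ)).choose ((k : ℕ) - (t : ℕ)) : ℝ) *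
        ∑ i ∈ Finset.range ((k : ℕ) - (t : ℕ) + 1),
          (((k : ℕ) - (t : ℕ)).choose i : ℝ) * (-1) ^ ((k : ℕ) - (t : ℕ) - i) *
            (1 - θ * ((m : ℝ) - (t : ℕ) - i) / m) ^ n := by
  rw [P_pow, mul_apply]
  simp only [mul_diagonal]
  rw [sum_eigenvectorMatrix_mul_mul_eigenvectorMatrixInv m (fun s => eigenvalue m θ s ^ n) htk]
  simp only [eigenvalue, Nat.cast_add, sub_add_eq_sub_sub]

theorem occupancy_n_step_transition (m n : ℕ) (hm : 0 < m) (θ : ℝ)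
    (hθ0 : 0 < θ) (hθ1 : θ ≤ 1) (t k : Fin (m + 1)) (htk : (t : ℕ) ≤ (k : ℕ)) :
    (P m θ ^ n) t k =
      ((m - (t : ℕ)).choose ((k : ℕ) - (t : ℕ)) : ℝ) *
        ∑ i ∈ Finset.range ((k : ℕ) - (t : ℕ) + 1),
          (((k : ℕ) - (t : ℕ)).choose i : ℝ) * (-1) ^ ((k : ℕ) - (t : ℕ) - i) *
            (1 - θ * ((m : ℝ) - (t : ℕ) - i) / m) ^ n :=
  occupancy_n_step_transition_general m n θ t k htk
end

section
/- For the extended occupancy distribution with parameters n, m, θ, and for any nonnegative integer r ≤ m, the falling-factorial moment satisfies E[(m − K)_r] = (m)_r · (1 − θr/m)^n, where K is a random variable with P(K = k) = Occ(k|n, m, θ). -/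
open Finset

/-- Extended occupancy mass function. -/
noncomputable def Occ (k n m : ℕ) (θ : ℝ) : ℝ :=
  (Nat.choose m k : ℝ) *
    ∑ i ∈ Finset.range (k + 1),
      (Nat.choose k i : ℝ) * (-1) ^ (k - i) * (1 - θ * ((m : ℝ) - i) / m) ^ n

/-- Falling factorial `(t)_r = t (t-1) ⋯ (t-r+1)`. -/
noncomputable def ffall (t : ℝ) (r : ℕ) : ℝ := ∏ i ∈ Finset.range r, (t - (i : ℝ))

/-!
Writing `f i = (1 - θ (m - i) / m) ^ n`, the inner sum of `Occ k n m θ` is the iterated forward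
difference `Δ^k f 0`, so `Occ k n m θ = C(m, k) Δ^k f 0`. The identity
`(m - k)_r C(m, k) = (m)_r C(m - r, k)` pulls `(m)_r` out of the moment, and what remains,
`∑_k C(m - r, k) Δ^k f 0`, is Newton's forward-difference expansion of `f (m - r)`.
-/

open scoped fwdDiff Function

theorem Nat.choose_mul_choose_sub_comm (m k r : ℕ) :
    m.choose k * (m - k).choose r = m.choose r * (m - r).choose k := by
  have hk := Nat.choose_mul (n := m) (Nat.le_add_right k r)
  have hr := Nat.choose_mul (n := m) (Nat.le_add_left r k)
  rw [Nat.add_sub_cancel_left] at hk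
  rw [Nat.add_sub_cancel] at hr
  rw [← hk, ← hr, Nat.choose_symm_add]

theorem Nat.descFactorial_sub_mul_choose (m k r : ℕ) :
    (m - k).descFactorial r * m.choose k = m.descFactorial r * (m - r).choose k := by
  rw [Nat.descFactorial_eq_factorial_mul_choose, Nat.descFactorial_eq_factorial_mul_choose,
    mul_assoc, mul_assoc, mul_comm _ (m.choose k), Nat.choose_mul_choose_sub_comm]

theorem ffall_natCast (N r : ℕ) : ffall N r = N.descFactorial r := by
  rw [ffall, ← descPochhammer_eval_eq_prod_range, descPochhammer_eval_eq_descFactorial]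

theorem fwdDiff_iter_one_eq_sum {R : Type*} [CommRing R] (f : ℕ → R) (k : ℕ) :
    Δ_[1] ^[k] f 0 = ∑ i ∈ range (k + 1), (k.choose i : R) * (-1) ^ (k - i) * f i := by
  rw [fwdDiff_iter_eq_sum_shift]
  refine sum_congr rfl fun i _ => ?_
  rw [smul_eq_mul, mul_one, zero_add, zsmul_eq_mul]
  push_cast
  ring

theorem sum_choose_mul_fwdDiff_iter {R : Type*} [CommRing R] (f : ℕ → R) {M N : ℕ}
    (h : M ≤ N) : ∑ k ∈ range (N + 1), (M.choose k : R) * Δ_[1] ^[k] f 0 = f M := by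
  have hM : f M = ∑ k ∈ range (M + 1), (M.choose k : R) * Δ_[1] ^[k] f 0 := by
    simpa [zsmul_eq_mul] using shift_eq_sum_fwdDiff_iter 1 f M 0
  rw [hM]
  refine (sum_subset (range_subset_range.2 (by omega)) fun k _ hk => ?_).symm
  rw [Nat.choose_eq_zero_of_lt (by simpa using hk), Nat.cast_zero, zero_mul]

theorem sum_descFactorial_sub_mul_choose_mul_fwdDiff_iter {R : Type*} [CommRing R]
    (f : ℕ → R) {m r : ℕ} (hr : r ≤ m) :
    ∑ k ∈ range (m + 1), ((m - k).descFactorial r * m.choose k : R) * Δ_[1] ^[k] f 0 =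
      m.descFactorial r * f (m - r) := by
  simp_rw [← Nat.cast_mul, Nat.descFactorial_sub_mul_choose, Nat.cast_mul, mul_assoc, ← mul_sum]
  rw [sum_choose_mul_fwdDiff_iter f (by omega : m - r ≤ m)]

theorem occupancy_factorial_moments_general (n m r : ℕ) (θ : ℝ) (hr : r ≤ m) :
    ∑ k ∈ Finset.range (m + 1), ffall ((m : ℝ) - k) r * Occ k n m θ =
      ffall (m : ℝ) r * (1 - θ * r / m) ^ n := by
  set f : ℕ → ℝ := fun i => (1 - θ * ((m : ℝ) - i) / m) ^ n
  have hOcc : ∀ k, Occ k n m θ = m.choose k * Δ_[1] ^[k] f 0 := fun k => by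
    rw [Occ, fwdDiff_iter_one_eq_sum]
  have hffall : ∀ k ∈ range (m + 1), ffall ((m : ℝ) - k) r = (m - k).descFactorial r := by
    intro k hk
    rw [← ffall_natCast, Nat.cast_sub (by simpa [Nat.lt_succ_iff] using hk)]
  rw [sum_congr rfl fun k hk => by rw [hffall k hk, hOcc, ← mul_assoc],
    sum_descFactorial_sub_mul_choose_mul_fwdDiff_iter f hr, ffall_natCast]
  simp [f, Nat.cast_sub hr]

theorem occupancy_factorial_moments (n m r : ℕ) (hm : 0 < m) (θ : ℝ)
    (hθ0 : 0 < θ) (hθ1 : θ ≤ 1) (hr : r ≤ m) :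
    ∑ k ∈ Finset.range (m + 1), ffall ((m : ℝ) - k) r * Occ k n m θ =
      ffall (m : ℝ) r * (1 - θ * r / m) ^ n :=
  occupancy_factorial_moments_general n m r θ hr
end

section
/- The mean of the extended occupancy distribution is m·(1 − (1 − θ/m)^n); i.e., ∑_{k=0}^{m} k·Occ(k|n, m, θ) = m·(1 − (1 − θ/m)^n). -/
/-!
The inner sum in `Occ k n m θ` is the `k`-th forward difference `Δ^k f 0` of
`f i = (1 - θ (m - i) / m) ^ n`. Since `k * C(m, k) = m * C(m - 1, k - 1)`, the mean is
`m * ∑ j, C(m - 1, j) Δ^j (Δ f) 0`, which by the Gregory–Newton formula is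
`m * Δ f (m - 1) = m * (f m - f (m - 1)) = m * (1 - (1 - θ / m) ^ n)`.
-/

open Finset

open fwdDiff

theorem sum_mul_choose_smul_fwdDiff_iter {M G : Type*} [AddCommMonoid M] [AddCommGroup G]
    (h : M) (f : M → G) (m : ℕ) (y : M) :
    ∑ k ∈ range (m + 2), (k * (m + 1).choose k) • Δ_[h] ^[k] f y =
      (m + 1) • Δ_[h] f (y + m • h) := by
  have hchoose (k : ℕ) : (k + 1) * (m + 1).choose (k + 1) = (m + 1) * m.choose k := by
    rw [Nat.add_one_mul_choose_eq, mul_comm]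
  rw [sum_range_succ', shift_eq_sum_fwdDiff_iter h (Δ_[h] f), smul_sum]
  simp only [hchoose, mul_smul, Function.iterate_succ_apply, zero_mul, zero_smul, add_zero]

theorem fwdDiff_iter_zero_eq_sum (f : ℕ → ℝ) (k : ℕ) :
    Δ_[1] ^[k] f 0 = ∑ i ∈ range (k + 1), (k.choose i : ℝ) * (-1) ^ (k - i) * f i := by
  rw [fwdDiff_iter_eq_sum_shift]
  refine sum_congr rfl fun i _ => ?_
  simp only [zero_add, smul_eq_mul, mul_one, zsmul_eq_mul]
  push_cast
  ring

theorem occ_eq_choose_mul_fwdDiff_iter (k n m : ℕ) (θ : ℝ) :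
    Occ k n m θ = m.choose k * Δ_[1] ^[k] (fun i : ℕ => (1 - θ * ((m : ℝ) - i) / m) ^ n) 0 := by
  rw [Occ, fwdDiff_iter_zero_eq_sum]

theorem occupancy_mean_general (n m : ℕ) (θ : ℝ) :
    ∑ k ∈ Finset.range (m + 1), (k : ℝ) * Occ k n m θ =
      (m : ℝ) * (1 - (1 - θ / m) ^ n) := by
  rcases m with _ | m
  · simp
  set f : ℕ → ℝ := fun i => (1 - θ * (((m + 1 : ℕ) : ℝ) - i) / (m + 1 : ℕ)) ^ n
  calc ∑ k ∈ range (m + 1 + 1), (k : ℝ) * Occ k n (m + 1) θ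
      = ∑ k ∈ range (m + 2), (k * (m + 1).choose k) • Δ_[1] ^[k] f 0 := by
        simp only [occ_eq_choose_mul_fwdDiff_iter, nsmul_eq_mul, Nat.cast_mul, mul_assoc, f]
    _ = (m + 1) • (f (m + 1) - f m) := by
        rw [sum_mul_choose_smul_fwdDiff_iter, fwdDiff, zero_add, smul_eq_mul, mul_one]
    _ = ((m + 1 : ℕ) : ℝ) * (1 - (1 - θ / (m + 1 : ℕ)) ^ n) := by
        simp only [f, nsmul_eq_mul]
        push_cast
        ring_nf

theorem occupancy_mean (n m : ℕ) (hm : 0 < m) (θ : ℝ) (hθ0 : 0 < θ) (hθ1 : θ ≤ 1) :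
    ∑ k ∈ Finset.range (m + 1), (k : ℝ) * Occ k n m θ =
      (m : ℝ) * (1 - (1 - θ / m) ^ n) :=
  occupancy_mean_general n m θ
end

section
/- For each fixed k and n with 0 ≤ k ≤ n and θ ∈ (0, 1], the extended occupancy mass function converges to the binomial mass function as m → ∞: lim_{m→∞} Occ(k|n, m, θ) = C(n, k)·θ^k·(1−θ)^{n−k}. -/
/-!
The inner sum of `Occ k n m θ` is the `k`-th forward difference at `0` of
`x ↦ (1 - θ + θ x / m) ^ n`. Expanding by the binomial theorem, `Δᵏ` kills `x ^ j` for `j < k`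
and sends `x ^ k` to `k!`, while `C(m, k) / m ^ j` tends to `1 / k!` for `j = k` and to `0` for
`j > k`; only the binomial term `C(n, k) θ ^ k (1 - θ) ^ (n - k)` survives.
-/

open Finset Filter

open Topology
open scoped Nat

lemma tendsto_choose_mul_inv_pow_self (k : ℕ) :
    Tendsto (fun m : ℕ => (m.choose k : ℝ) * ((m : ℝ)⁻¹) ^ k) atTop (𝓝 (1 / k !)) := by
  have hmul : Tendsto (fun m : ℕ => (m : ℝ) * (m : ℝ)⁻¹) atTop (𝓝 1) :=
    tendsto_const_nhds.congr' <| by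
      filter_upwards [eventually_ne_atTop 0] with m hm
      rw [mul_inv_cancel₀ (Nat.cast_ne_zero.mpr hm)]
  simpa using ProbabilityTheory.tendsto_choose_mul_pow_atTop k hmul

lemma tendsto_choose_mul_inv_pow_of_lt {k j : ℕ} (hkj : k < j) :
    Tendsto (fun m : ℕ => (m.choose k : ℝ) * ((m : ℝ)⁻¹) ^ j) atTop (𝓝 0) := by
  have hinv : Tendsto (fun m : ℕ => ((m : ℝ)⁻¹) ^ (j - k)) atTop (𝓝 0) := by
    simpa [zero_pow (Nat.sub_ne_zero_of_lt hkj)] using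
      (tendsto_inv_atTop_nhds_zero_nat (𝕜 := ℝ)).pow (j - k)
  rw [← mul_zero (1 / k ! : ℝ)]
  refine ((tendsto_choose_mul_inv_pow_self k).mul hinv).congr fun m => ?_
  rw [mul_assoc, ← pow_add, Nat.add_sub_cancel' hkj.le]

lemma tendsto_fwdDiff_iter_pow_mul_choose_mul_inv_pow (k j : ℕ) :
    Tendsto (fun m : ℕ =>
        (fwdDiff 1)^[k] (fun x : ℝ => x ^ j) 0 * ((m.choose k : ℝ) * ((m : ℝ)⁻¹) ^ j))
      atTop (𝓝 (if j = k then 1 else 0)) := by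
  rcases lt_trichotomy j k with hjk | rfl | hkj
  · simp [fwdDiff_iter_pow_eq_zero_of_lt hjk, hjk.ne]
  · have h := (tendsto_choose_mul_inv_pow_self j).const_mul (j ! : ℝ)
    rw [mul_one_div_cancel (Nat.cast_ne_zero.mpr j.factorial_ne_zero)] at h
    simpa [fwdDiff_iter_eq_factorial] using h
  · simpa [hkj.ne'] using
      (tendsto_choose_mul_inv_pow_of_lt hkj).const_mul ((fwdDiff 1)^[k] (fun x : ℝ => x ^ j) 0)

lemma Occ_eq_choose_mul_fwdDiff_iter (k n m : ℕ) (θ : ℝ) :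
    Occ k n m θ = m.choose k * (fwdDiff 1)^[k] (fun x : ℝ => (1 - θ * (m - x) / m) ^ n) 0 := by
  rw [Occ, fwdDiff_iter_eq_sum_shift]
  congr 1
  refine sum_congr rfl fun i _ => ?_
  simp only [zsmul_eq_mul, nsmul_eq_mul]
  push_cast
  ring

lemma Occ_eq_sum_fwdDiff_iter_pow (k n : ℕ) {m : ℕ} (hm : m ≠ 0) (θ : ℝ) :
    Occ k n m θ = ∑ j ∈ range (n + 1), n.choose j * θ ^ j * (1 - θ) ^ (n - j) *
      ((fwdDiff 1)^[k] (fun x : ℝ => x ^ j) 0 * ((m.choose k : ℝ) * ((m : ℝ)⁻¹) ^ j)) := by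
  have hm' : (m : ℝ) ≠ 0 := Nat.cast_ne_zero.mpr hm
  have hexpand : (fun x : ℝ => (1 - θ * (m - x) / m) ^ n) =
      ∑ j ∈ range (n + 1), (n.choose j * θ ^ j * (1 - θ) ^ (n - j) * ((m : ℝ)⁻¹) ^ j) •
        fun x : ℝ => x ^ j := by
    funext x
    rw [show 1 - θ * (m - x) / m = θ * (m : ℝ)⁻¹ * x + (1 - θ) by field_simp; ring, add_pow,
      Finset.sum_apply]
    refine sum_congr rfl fun j _ => ?_
    simp only [Pi.smul_apply, smul_eq_mul]
    ring
  rw [Occ_eq_choose_mul_fwdDiff_iter, hexpand, fwdDiff_iter_finsetSum, Finset.sum_apply,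
    Finset.mul_sum]
  refine sum_congr rfl fun j _ => ?_
  rw [fwdDiff_iter_const_smul, Pi.smul_apply, smul_eq_mul]
  ring

theorem occupancy_tendsto_binomial_general (n k : ℕ) (θ : ℝ) :
    Filter.Tendsto (fun m : ℕ => Occ k n m θ) Filter.atTop
      (nhds ((Nat.choose n k : ℝ) * θ ^ k * (1 - θ) ^ (n - k))) := by
  have hsum := tendsto_finsetSum (range (n + 1)) fun j _ =>
    (tendsto_fwdDiff_iter_pow_mul_choose_mul_inv_pow k j).const_mul
      ((n.choose j : ℝ) * θ ^ j * (1 - θ) ^ (n - j))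
  have hlimit : ∑ j ∈ range (n + 1), (n.choose j : ℝ) * θ ^ j * (1 - θ) ^ (n - j) *
      (if j = k then 1 else 0) = n.choose k * θ ^ k * (1 - θ) ^ (n - k) := by
    simp only [mul_ite, mul_one, mul_zero, sum_ite_eq', mem_range]
    split_ifs with hk
    · rfl
    · simp [Nat.choose_eq_zero_of_lt (by omega : n < k)]
  rw [← hlimit]
  refine hsum.congr' ?_
  filter_upwards [eventually_ne_atTop 0] with m hm
  rw [Occ_eq_sum_fwdDiff_iter_pow k n hm]

theorem occupancy_tendsto_binomial (n k : ℕ) (hk : k ≤ n) (θ : ℝ)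
    (hθ0 : 0 < θ) (hθ1 : θ ≤ 1) :
    Filter.Tendsto (fun m : ℕ => Occ k n m θ) Filter.atTop
      (nhds ((Nat.choose n k : ℝ) * θ ^ k * (1 - θ) ^ (n - k))) :=
  occupancy_tendsto_binomial_general n k θ
end

section
/- Poisson mixtures of extended occupancy distributions yield a binomial: for fixed m ≥ 1, θ ∈ (0, 1], λ > 0 and 0 ≤ k ≤ m, ∑_{r=0}^{∞} (e^{−λ}λ^r/r!)·Occ(k|r, m, θ) = C(m, k)·(1 − e^{−λθ/m})^k·(e^{−λθ/m})^{m−k}. -/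
/-!
Expanding `Occ` by its defining alternating sum reduces the mixture to finitely many Poisson
probability generating functions: `∑ₙ e^{-λ} λⁿ/n! · xⁿ = e^{-λ(1-x)}`. At `x = 1 - θ(m-i)/m`
this is `qᵐ⁻ⁱ` with `q = e^{-λθ/m}`, and the binomial theorem sums
`∑ᵢ C(k,i) (-1)ᵏ⁻ⁱ qᵐ⁻ⁱ` to `(1 - q)ᵏ qᵐ⁻ᵏ`.
-/

open Finset Real

open Nat

theorem hasSum_poisson_mul_pow (lam x : ℝ) :
    HasSum (fun n : ℕ => exp (-lam) * lam ^ n / n ! * x ^ n) (exp (-(lam * (1 - x)))) := by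
  have h := (NormedSpace.expSeries_div_hasSum_exp (lam * x)).mul_left (exp (-lam))
  rw [← exp_eq_exp_ℝ, ← exp_add, show -lam + lam * x = -(lam * (1 - x)) by ring] at h
  convert! h using 2 with n
  ring

theorem hasSum_poisson_mul_sum_pow {ι : Type*} (s : Finset ι) (c x : ι → ℝ) (lam : ℝ) :
    HasSum (fun n : ℕ => exp (-lam) * lam ^ n / n ! * ∑ i ∈ s, c i * x i ^ n)
      (∑ i ∈ s, c i * exp (-(lam * (1 - x i)))) := by
  simp_rw [mul_sum]
  refine hasSum_sum fun i _ => ?_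
  convert! (hasSum_poisson_mul_pow lam (x i)).mul_left (c i) using 2 with n
  ring

theorem hasSum_poisson_mul_Occ (k m : ℕ) (θ lam : ℝ) :
    HasSum (fun n : ℕ => exp (-lam) * lam ^ n / n ! * Occ k n m θ)
      ((m.choose k : ℝ) * ∑ i ∈ range (k + 1),
        (k.choose i : ℝ) * (-1) ^ (k - i) * exp (-(lam * θ * ((m : ℝ) - i) / m))) := by
  convert! (hasSum_poisson_mul_sum_pow (range (k + 1)) (fun i => (k.choose i : ℝ) * (-1) ^ (k - i))
    (fun i => 1 - θ * ((m : ℝ) - i) / m) lam).mul_left (m.choose k : ℝ) using 1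
  · funext n
    rw [Occ]
    ring
  · simp only [sub_sub_cancel, mul_div_assoc, mul_assoc]

theorem sum_choose_mul_neg_one_pow_mul_pow {R : Type*} [CommRing R] (q : R) {k m : ℕ}
    (hk : k ≤ m) :
    ∑ i ∈ range (k + 1), (k.choose i : R) * (-1) ^ (k - i) * q ^ (m - i) =
      (1 - q) ^ k * q ^ (m - k) := by
  rw [sub_eq_add_neg, add_pow, sum_mul]
  refine sum_congr rfl fun i hi => ?_
  rw [show m - i = (k - i) + (m - k) by grind, pow_add, neg_pow]
  ring

theorem poisson_mixture_of_occupancy_general (m k : ℕ) (hk : k ≤ m)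
    (θ : ℝ) (lam : ℝ) :
    ∑' r : ℕ, (Real.exp (-lam) * lam ^ r / (Nat.factorial r : ℝ)) * Occ k r m θ =
      (Nat.choose m k : ℝ) * (1 - Real.exp (-lam * θ / m)) ^ k *
        (Real.exp (-lam * θ / m)) ^ (m - k) := by
  set q := exp (-lam * θ / m)
  have hexp : ∀ i ∈ range (k + 1), exp (-(lam * θ * ((m : ℝ) - i) / m)) = q ^ (m - i) :=
    fun i hi => by
      rw [← exp_nat_mul, Nat.cast_sub (by grind)]
      ring_nf
  rw [(hasSum_poisson_mul_Occ k m θ lam).tsum_eq, sum_congr rfl fun i hi => by rw [hexp i hi],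
    sum_choose_mul_neg_one_pow_mul_pow q hk]
  ring

theorem poisson_mixture_of_occupancy (m k : ℕ) (hm : 0 < m) (hk : k ≤ m)
    (θ : ℝ) (hθ0 : 0 < θ) (hθ1 : θ ≤ 1) (lam : ℝ) (hlam : 0 < lam) :
    ∑' r : ℕ, (Real.exp (-lam) * lam ^ r / (Nat.factorial r : ℝ)) * Occ k r m θ =
      (Nat.choose m k : ℝ) * (1 - Real.exp (-lam * θ / m)) ^ k *
        (Real.exp (-lam * θ / m)) ^ (m - k) :=
  poisson_mixture_of_occupancy_general m k hk θ lam
end
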